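/- arXiv:1802.06447 — 3 statements merged into one kernel-verified Lean document; each statement's English description precedes it below -/
import Mathlib

section
/- For every integer n ≥ 2 and every real p with n-1 ≤ p ≤ n, there exists a constant C > 0 (depending only on p and n) such that for all complex numbers z: Re(log(1+z)) + Re(∑_{m=1}^{n-1} (-1)^m z^m / m) ≤ C |z|^p, where for z = -1 the left-hand side is interpreted as -∞. -/
open Complex Finset

/-! For `‖z‖ ≤ 1/2` the left-hand side is the real part of the remainder
`log (1 + z) - logTaylor n z`, which is `O(‖z‖ ^ n)` and hence `O(‖z‖ ^ p)` since `p ≤ n`.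
For `‖z‖ ≥ 1/2` every term is crudely bounded: `Re log (1 + z) = log ‖1 + z‖ ≤ ‖z‖`, and the
`m`-th Taylor term is at most `‖z‖ ^ m ≤ (2‖z‖) ^ p` because `2‖z‖ ≥ 1` and `m ≤ n - 1 ≤ p`. -/

theorem pow_le_two_rpow_mul_rpow {r p : ℝ} {m : ℕ} (hr : 1 / 2 ≤ r) (hmp : (m : ℝ) ≤ p) :
    r ^ m ≤ 2 ^ p * r ^ p := by
  have h2r : 1 ≤ 2 * r := by linarith
  calc r ^ m ≤ (2 * r) ^ m := by gcongr; linarith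
    _ = (2 * r) ^ (m : ℝ) := (Real.rpow_natCast _ _).symm
    _ ≤ (2 * r) ^ p := Real.rpow_le_rpow_of_exponent_le h2r hmp
    _ = 2 ^ p * r ^ p := Real.mul_rpow zero_le_two (by linarith)

namespace Complex

theorem sum_Icc_neg_one_pow_mul_pow_div_eq_neg_logTaylor (n : ℕ) (z : ℂ) :
    ∑ m ∈ Icc 1 (n - 1), ((-1 : ℂ) ^ m * z ^ m / m) = -logTaylor n z := by
  rw [logTaylor, ← sum_neg_distrib]
  refine sum_subset (fun m hm ↦ ?_) (fun m hm hm' ↦ ?_) |>.trans (sum_congr rfl fun m _ ↦ ?_)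
  · simp only [mem_Icc, mem_range] at hm ⊢
    omega
  · simp only [mem_Icc, mem_range] at hm hm'
    obtain rfl : m = 0 := by omega
    simp
  · ring

theorem re_log_one_add_le_norm (z : ℂ) : (log (1 + z)).re ≤ ‖z‖ := by
  rw [log_re]
  rcases (norm_nonneg (1 + z)).eq_or_lt with h | h
  · rw [← h, Real.log_zero]
    positivity
  · calc Real.log ‖1 + z‖ ≤ ‖1 + z‖ - 1 := Real.log_le_sub_one_of_pos h
      _ ≤ ‖z‖ := by linarith [norm_add_le 1 z, norm_one (α := ℂ)]

theorem norm_log_one_add_sub_logTaylor_le_of_norm_le_half {n : ℕ} (hn : n ≠ 0) {z : ℂ}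
    (hz : ‖z‖ ≤ 1 / 2) : ‖log (1 + z) - logTaylor n z‖ ≤ 2 * ‖z‖ ^ n := by
  obtain ⟨k, rfl⟩ := Nat.exists_eq_succ_of_ne_zero hn
  have hinv : (1 - ‖z‖)⁻¹ ≤ 2 := by
    rw [inv_le_comm₀ (by linarith) two_pos]
    linarith
  calc ‖log (1 + z) - logTaylor (k + 1) z‖
      ≤ ‖z‖ ^ (k + 1) * (1 - ‖z‖)⁻¹ / (k + 1) := norm_log_sub_logTaylor_le k (by linarith)
    _ ≤ ‖z‖ ^ (k + 1) * (1 - ‖z‖)⁻¹ :=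
        div_le_self (mul_nonneg (by positivity) (inv_nonneg.2 (by linarith))) (by simp)
    _ ≤ 2 * ‖z‖ ^ (k + 1) := by nlinarith [pow_nonneg (norm_nonneg z) (k + 1)]

theorem norm_logTaylor_le_of_half_le_norm {n : ℕ} {p : ℝ} {z : ℂ} (hz : 1 / 2 ≤ ‖z‖)
    (hnp : (n : ℝ) - 1 ≤ p) : ‖logTaylor n z‖ ≤ n * (2 ^ p * ‖z‖ ^ p) := by
  have hterm (j : ℕ) (hj : j ∈ range n) :
      ‖(-1 : ℂ) ^ (j + 1) * z ^ j / j‖ ≤ 2 ^ p * ‖z‖ ^ p := by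
    have hjp : (j : ℝ) ≤ p := by
      have : (j : ℝ) + 1 ≤ n := by exact_mod_cast mem_range.1 hj
      linarith
    rcases j.eq_zero_or_pos with rfl | hj0
    · simp only [Nat.cast_zero, div_zero, norm_zero]
      positivity
    · rw [norm_div, norm_mul, norm_pow, norm_pow, norm_neg, norm_one, one_pow, one_mul,
        norm_natCast]
      exact (div_le_self (by positivity) (by exact_mod_cast hj0)).trans
        (pow_le_two_rpow_mul_rpow hz hjp)
  calc ‖logTaylor n z‖ ≤ ∑ j ∈ range n, ‖(-1 : ℂ) ^ (j + 1) * z ^ j / j‖ := norm_sum_le _ _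
    _ ≤ ∑ _j ∈ range n, 2 ^ p * ‖z‖ ^ p := sum_le_sum hterm
    _ = n * (2 ^ p * ‖z‖ ^ p) := by rw [sum_const, card_range, nsmul_eq_mul]

theorem re_log_one_add_sub_logTaylor_le_of_half_le_norm {n : ℕ} {p : ℝ} {z : ℂ}
    (hz : 1 / 2 ≤ ‖z‖) (hp : 1 ≤ p) (hnp : (n : ℝ) - 1 ≤ p) :
    (log (1 + z) - logTaylor n z).re ≤ (n + 1) * (2 ^ p * ‖z‖ ^ p) := by
  have hz1 : ‖z‖ ≤ 2 ^ p * ‖z‖ ^ p := by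
    simpa using pow_le_two_rpow_mul_rpow (m := 1) hz (by simpa using hp)
  calc (log (1 + z) - logTaylor n z).re = (log (1 + z)).re - (logTaylor n z).re := sub_re _ _
    _ ≤ ‖z‖ + ‖logTaylor n z‖ := by
        linarith [re_log_one_add_le_norm z, abs_re_le_norm (logTaylor n z),
          neg_abs_le (logTaylor n z).re]
    _ ≤ (n + 1) * (2 ^ p * ‖z‖ ^ p) := by
        linarith [norm_logTaylor_le_of_half_le_norm hz hnp]

end Complex

/-- Pointwise estimate behind the bound on regularized determinants:
for `n ≥ 2` and `n-1 ≤ p ≤ n` there is `C > 0` with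
`Re log(1+z) + Re ∑_{m=1}^{n-1} (-1)^m z^m/m ≤ C |z|^p` for all `z ≠ -1`. -/
theorem stmt0 (n : ℕ) (hn : 2 ≤ n) (p : ℝ) (hp1 : (n : ℝ) - 1 ≤ p) (hp2 : p ≤ n) :
    ∃ C : ℝ, 0 < C ∧ ∀ z : ℂ, z ≠ -1 →
      (Complex.log (1 + z)).re + (∑ m ∈ Finset.Icc 1 (n - 1), ((-1 : ℂ) ^ m * z ^ m / m)).re
        ≤ C * ‖z‖ ^ p := by
  have hn' : (2 : ℝ) ≤ n := by exact_mod_cast hn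
  have hp : 1 ≤ p := by linarith
  refine ⟨(n + 1) * 2 ^ (n : ℝ), by positivity, fun z _ ↦ ?_⟩
  rw [sum_Icc_neg_one_pow_mul_pow_div_eq_neg_logTaylor, neg_re, ← sub_eq_add_neg, ← sub_re]
  rcases le_total ‖z‖ (1 / 2) with hz | hz
  · have h2C : 2 ≤ ((n : ℝ) + 1) * 2 ^ (n : ℝ) := by
      nlinarith [Real.one_le_rpow one_le_two (Nat.cast_nonneg n)]
    calc (log (1 + z) - logTaylor n z).re ≤ ‖log (1 + z) - logTaylor n z‖ := re_le_norm _
      _ ≤ 2 * ‖z‖ ^ n := norm_log_one_add_sub_logTaylor_le_of_norm_le_half (by omega) hz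
      _ ≤ 2 * ‖z‖ ^ p := by
          gcongr
          simpa using
            Real.rpow_le_rpow_of_exponent_ge' (norm_nonneg z) (by linarith) (by linarith) hp2
      _ ≤ ((n : ℝ) + 1) * 2 ^ (n : ℝ) * ‖z‖ ^ p := by gcongr
  · calc (log (1 + z) - logTaylor n z).re ≤ (n + 1) * (2 ^ p * ‖z‖ ^ p) :=
          re_log_one_add_sub_logTaylor_le_of_half_le_norm hz hp hp1
      _ ≤ ((n : ℝ) + 1) * 2 ^ (n : ℝ) * ‖z‖ ^ p := by
          rw [← mul_assoc]
          gcongr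
          exact one_le_two
end

section
/- Let η : ℝ³ × ℝ³ × ℝ → ℂ be measurable with M^p := sup_{x,y} ∫_ℝ |η(x,y,λ)|^p dλ < ∞ for some p ≥ 2, and let W₁, W₂ ∈ L²(ℝ³). Then ∫_ℝ (∫_{ℝ³}∫_{ℝ³} |W₁(x)|² |η(x,y,λ)|² |W₂(y)|² dx dy)^{p/2} dλ ≤ M^p ‖W₁‖_{L²}^p ‖W₂‖_{L²}^p. -/
open MeasureTheory ENNReal

/-!
Weighting by the densities `|W₁|²` and `|W₂|²` turns the inner double integral into
`∫ |η(·,·,λ)|² dρ` for the product measure `ρ = |W₁|² dx ⊗ |W₂|² dy`, of total mass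
`‖W₁‖₂² ‖W₂‖₂²`. Jensen's inequality for the exponent `p/2 ≥ 1` (Hölder against the constant `1`)
bounds its `p/2`-th power by `ρ(univ)^(p/2 - 1) ∫ |η|^p dρ`; integrating in `λ`, Tonelli and the
uniform bound `∫ |η(x,y,λ)|^p dλ ≤ M^p` give `M^p ρ(univ)^(p/2)`.
-/

theorem lintegral_rpow_le_lintegral_rpow_mul_measure_univ {α : Type*} [MeasurableSpace α]
    (μ : Measure α) {F : α → ℝ≥0∞} (hF : AEMeasurable F μ) {r : ℝ} (hr : 1 ≤ r) :
    (∫⁻ a, F a ∂μ) ^ r ≤ (∫⁻ a, F a ^ r ∂μ) * μ Set.univ ^ (r - 1) := by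
  obtain rfl | hr := hr.eq_or_lt
  · simp
  have hr0 : r ≠ 0 := by positivity
  have hconj : r.HolderConjugate (r / (r - 1)) := Real.HolderConjugate.conjExponent hr
  calc (∫⁻ a, F a ∂μ) ^ r = (∫⁻ a, F a * 1 ∂μ) ^ r := by simp
    _ ≤ ((∫⁻ a, F a ^ r ∂μ) ^ (1 / r) *
          (∫⁻ _, 1 ^ (r / (r - 1)) ∂μ) ^ (1 / (r / (r - 1)))) ^ r := by
        gcongr
        exact ENNReal.lintegral_mul_le_Lp_mul_Lq μ hconj hF aemeasurable_const
    _ = (∫⁻ a, F a ^ r ∂μ) * μ Set.univ ^ (r - 1) := by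
        rw [ENNReal.mul_rpow_of_nonneg _ _ (by positivity), ← ENNReal.rpow_mul,
          ← ENNReal.rpow_mul]
        simp [hr0]

theorem lintegral_prod_withDensity {α β : Type*} [MeasurableSpace α] [MeasurableSpace β]
    {μ : Measure α} {ν : Measure β} [SFinite ν] {a : α → ℝ≥0∞} {b : β → ℝ≥0∞}
    (ha : AEMeasurable a μ) (hb : AEMeasurable b ν) {f : α × β → ℝ≥0∞} (hf : Measurable f) :
    ∫⁻ z, f z ∂(μ.withDensity a).prod (ν.withDensity b) =
      ∫⁻ x, ∫⁻ y, a x * f (x, y) * b y ∂ν ∂μ := by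
  rw [lintegral_prod _ hf.aemeasurable,
    lintegral_withDensity_eq_lintegral_mul₀ ha (hf.lintegral_prod_right'.aemeasurable)]
  refine lintegral_congr fun x => ?_
  have hfx : Measurable fun y => f (x, y) := hf.comp measurable_prodMk_left
  rw [Pi.mul_apply, lintegral_withDensity_eq_lintegral_mul₀ hb hfx.aemeasurable,
    ← lintegral_const_mul'' _ (hb.mul hfx.aemeasurable)]
  exact lintegral_congr fun y => by simp only [Pi.mul_apply]; ring

theorem prod_withDensity_univ {α β : Type*} [MeasurableSpace α] [MeasurableSpace β]
    (μ : Measure α) (ν : Measure β) [SFinite ν] (a : α → ℝ≥0∞) (b : β → ℝ≥0∞) :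
    (μ.withDensity a).prod (ν.withDensity b) Set.univ = (∫⁻ x, a x ∂μ) * ∫⁻ y, b y ∂ν := by
  rw [← Set.univ_prod_univ, Measure.prod_prod, withDensity_apply _ MeasurableSet.univ,
    withDensity_apply _ MeasurableSet.univ, setLIntegral_univ, setLIntegral_univ]

theorem lintegral_rpow_lintegral_le_of_forall_lintegral_rpow_le {Z Λ : Type*}
    [MeasurableSpace Z] [MeasurableSpace Λ] {ρ : Measure Z} {ν : Measure Λ} [SFinite ρ] [SFinite ν]
    {F : Z → Λ → ℝ≥0∞} (hF : Measurable (Function.uncurry F)) {r : ℝ} (hr : 1 ≤ r) {C : ℝ≥0∞}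
    (hC : ∀ z, ∫⁻ l, F z l ^ r ∂ν ≤ C) :
    ∫⁻ l, (∫⁻ z, F z l ∂ρ) ^ r ∂ν ≤ C * ρ Set.univ ^ r := by
  have hFr : Measurable (Function.uncurry fun z l => F z l ^ r) := hF.pow_const r
  calc ∫⁻ l, (∫⁻ z, F z l ∂ρ) ^ r ∂ν
      ≤ ∫⁻ l, (∫⁻ z, F z l ^ r ∂ρ) * ρ Set.univ ^ (r - 1) ∂ν :=
        lintegral_mono fun l => lintegral_rpow_le_lintegral_rpow_mul_measure_univ ρ
          (hF.comp (measurable_id.prodMk measurable_const)).aemeasurable hr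
    _ = (∫⁻ z, ∫⁻ l, F z l ^ r ∂ν ∂ρ) * ρ Set.univ ^ (r - 1) := by
        rw [lintegral_mul_const _ hFr.lintegral_prod_left,
          lintegral_lintegral_swap hFr.aemeasurable]
    _ ≤ C * ρ Set.univ * ρ Set.univ ^ (r - 1) := by
        gcongr
        exact (lintegral_mono hC).trans_eq (lintegral_const C)
    _ = C * ρ Set.univ ^ (1 + (r - 1)) := by
        rw [ENNReal.rpow_add_of_nonneg _ _ zero_le_one (by linarith), ENNReal.rpow_one, mul_assoc]
    _ = C * ρ Set.univ ^ r := by rw [add_sub_cancel]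

theorem stmt5_general (p M : ℝ) (hp : 2 ≤ p)
    (η : EuclideanSpace ℝ (Fin 3) → EuclideanSpace ℝ (Fin 3) → ℝ → ℂ)
    (hη : Measurable fun q : EuclideanSpace ℝ (Fin 3) × EuclideanSpace ℝ (Fin 3) × ℝ =>
      η q.1 q.2.1 q.2.2)
    (W1 W2 : EuclideanSpace ℝ (Fin 3) → ℂ)
    (hW1 : MemLp W1 2 volume) (hW2 : MemLp W2 2 volume)
    (hsup : ∀ x y, (∫⁻ l, (‖η x y l‖₊ : ℝ≥0∞) ^ p) ≤ ENNReal.ofReal (M ^ p)) :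
    (∫⁻ l, (∫⁻ x, ∫⁻ y,
        (‖W1 x‖₊ : ℝ≥0∞) ^ (2:ℝ) * (‖η x y l‖₊ : ℝ≥0∞) ^ (2:ℝ) * (‖W2 y‖₊ : ℝ≥0∞) ^ (2:ℝ))
          ^ (p / 2))
      ≤ ENNReal.ofReal (M ^ p) * (∫⁻ x, (‖W1 x‖₊ : ℝ≥0∞) ^ (2:ℝ)) ^ (p / 2) *
        (∫⁻ y, (‖W2 y‖₊ : ℝ≥0∞) ^ (2:ℝ)) ^ (p / 2) := by
  set ρ := (volume.withDensity fun x => (‖W1 x‖₊ : ℝ≥0∞) ^ (2:ℝ)).prod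
    (volume.withDensity fun y => (‖W2 y‖₊ : ℝ≥0∞) ^ (2:ℝ))
  have hF : Measurable (Function.uncurry
      fun (z : EuclideanSpace ℝ (Fin 3) × EuclideanSpace ℝ (Fin 3)) (l : ℝ) =>
        (‖η z.1 z.2 l‖₊ : ℝ≥0∞) ^ (2:ℝ)) :=
    (hη.comp (measurable_fst.fst.prodMk
      (measurable_fst.snd.prodMk measurable_snd))).enorm.pow_const _
  have hslice : ∀ l, ∫⁻ x, ∫⁻ y, (‖W1 x‖₊ : ℝ≥0∞) ^ (2:ℝ) * (‖η x y l‖₊ : ℝ≥0∞) ^ (2:ℝ) *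
      (‖W2 y‖₊ : ℝ≥0∞) ^ (2:ℝ) = ∫⁻ z, (‖η z.1 z.2 l‖₊ : ℝ≥0∞) ^ (2:ℝ) ∂ρ := fun l =>
    (lintegral_prod_withDensity (hW1.1.enorm.pow_const _) (hW2.1.enorm.pow_const _)
      (hF.comp (measurable_id.prodMk measurable_const))).symm
  simp_rw [hslice]
  calc _ ≤ ENNReal.ofReal (M ^ p) * ρ Set.univ ^ (p / 2) :=
        lintegral_rpow_lintegral_le_of_forall_lintegral_rpow_le hF (by linarith) fun z => by
          simpa only [← ENNReal.rpow_mul, mul_div_cancel₀ p two_ne_zero] using hsup z.1 z.2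
    _ = _ := by
        rw [prod_withDensity_univ, ENNReal.mul_rpow_of_nonneg _ _ (by positivity), mul_assoc]

/-- Hölder-inequality core of the `λ`-integrability of Hilbert–Schmidt norms
`‖W₁ T_λ W₂‖_{S₂}` for integral operators with kernels `η(·,·,λ)`. -/
theorem stmt5 (p M : ℝ) (hp : 2 ≤ p) (hM : 0 ≤ M)
    (η : EuclideanSpace ℝ (Fin 3) → EuclideanSpace ℝ (Fin 3) → ℝ → ℂ)
    (hη : Measurable fun q : EuclideanSpace ℝ (Fin 3) × EuclideanSpace ℝ (Fin 3) × ℝ =>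
      η q.1 q.2.1 q.2.2)
    (W1 W2 : EuclideanSpace ℝ (Fin 3) → ℂ)
    (hW1 : MemLp W1 2 volume) (hW2 : MemLp W2 2 volume)
    (hsup : ∀ x y, (∫⁻ l, (‖η x y l‖₊ : ℝ≥0∞) ^ p) ≤ ENNReal.ofReal (M ^ p)) :
    (∫⁻ l, (∫⁻ x, ∫⁻ y,
        (‖W1 x‖₊ : ℝ≥0∞) ^ (2:ℝ) * (‖η x y l‖₊ : ℝ≥0∞) ^ (2:ℝ) * (‖W2 y‖₊ : ℝ≥0∞) ^ (2:ℝ))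
          ^ (p / 2))
      ≤ ENNReal.ofReal (M ^ p) * (∫⁻ x, (‖W1 x‖₊ : ℝ≥0∞) ^ (2:ℝ)) ^ (p / 2) *
        (∫⁻ y, (‖W2 y‖₊ : ℝ≥0∞) ^ (2:ℝ)) ^ (p / 2) :=
  stmt5_general p M hp η hη W1 W2 hW1 hW2 hsup
end

section
/- Let λ ∈ ℂ with Im λ ≥ 0, and let x₁, y₁ ∈ ℝ satisfy |x₁| < |λ|/2 and |y₁| < |λ|/2, with λ ≠ 0. Set Λ = λ - (x₁ + y₁)/2, and for w ∈ ℂ let √w denote the branch with Im √w ≥ 0. Then for all r > 0: |e^{i√Λ · r} - e^{i√λ · r}| / (4π r) ≤ (√2 / (16π)) · |x₁ + y₁| / |λ|^{1/2}. -/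
/-!
On the closed left half-plane `|exp'| ≤ 1`, so `exp` is `1`-Lipschitz there. Both square roots lie
in the closed first quadrant, so `i √Λ r` and `i √λ r` lie in that half-plane and the kernel
difference is at most `|√Λ - √λ| r`. For `a, b` in the closed first quadrant
`|a - b| ≤ |a + b|`, while `|a + b|² + |a - b|² = 2(|a|² + |b|²) ≥ 3|b|²` and
`|a + b| |a - b| = |a² - b²| ≤ |b|²/2`; together these force `|a + b| ≥ √2 |b|`, which is the
Lipschitz bound `|√Λ - √λ| ≤ |Λ - λ| / (√2 |λ|^{1/2})`.
-/

open Complex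

theorem Complex.norm_exp_sub_exp_le_of_re_nonpos {z w : ℂ} (hz : z.re ≤ 0) (hw : w.re ≤ 0) :
    ‖exp z - exp w‖ ≤ ‖z - w‖ := by
  simpa using (convex_halfSpace_re_le 0).norm_image_sub_le_of_norm_hasFDerivWithin_le
    (f' := fun x => (1 : ℂ →L[ℂ] ℂ).smulRight (exp x)) (C := 1)
    (fun x _ => (hasDerivAt_exp x).hasFDerivAt.hasFDerivWithinAt)
    (fun x hx => by simpa [norm_exp] using Real.exp_le_one_iff.2 hx) hw hz

theorem Complex.norm_exp_I_mul_sub_exp_I_mul_le {a b : ℂ} (ha : 0 ≤ a.im) (hb : 0 ≤ b.im)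
    {r : ℝ} (hr : 0 ≤ r) :
    ‖exp (I * a * r) - exp (I * b * r)‖ ≤ ‖a - b‖ * r := by
  have hre (c : ℂ) (hc : 0 ≤ c.im) : (I * c * r).re ≤ 0 := by
    simpa [mul_re] using mul_nonneg hc hr
  calc ‖exp (I * a * r) - exp (I * b * r)‖ ≤ ‖I * a * r - I * b * r‖ :=
        norm_exp_sub_exp_le_of_re_nonpos (hre a ha) (hre b hb)
    _ = ‖a - b‖ * r := by
        rw [← sub_mul, ← mul_sub, norm_mul, norm_mul, norm_I, one_mul, norm_real,
          Real.norm_of_nonneg hr]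

theorem Complex.re_cpow_one_half_nonneg (z : ℂ) : 0 ≤ (z ^ (1 / 2 : ℂ)).re := by
  rw [one_div, cpow_inv_two_re]
  positivity

theorem Complex.im_cpow_one_half_nonneg {z : ℂ} (hz : 0 ≤ z.im) : 0 ≤ (z ^ (1 / 2 : ℂ)).im := by
  rw [one_div, cpow_inv_two_im_eq_sqrt hz]
  positivity

theorem Complex.cpow_one_half_sq (z : ℂ) : (z ^ (1 / 2 : ℂ)) ^ 2 = z := by
  rw [one_div, cpow_ofNat_inv_pow]

theorem Complex.norm_cpow_one_half (z : ℂ) : ‖z ^ (1 / 2 : ℂ)‖ = √‖z‖ := by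
  conv_rhs => rw [← cpow_one_half_sq z, norm_pow, Real.sqrt_sq (norm_nonneg _)]

section FirstQuadrant

variable {a b : ℂ} (ha : 0 ≤ a.re ∧ 0 ≤ a.im) (hb : 0 ≤ b.re ∧ 0 ≤ b.im)
include ha hb

theorem Complex.norm_sub_le_norm_add_of_first_quadrant : ‖a - b‖ ≤ ‖a + b‖ := by
  rw [← sq_le_sq₀ (norm_nonneg _) (norm_nonneg _), Complex.sq_norm, Complex.sq_norm,
    normSq_apply, normSq_apply]
  simp only [sub_re, sub_im, add_re, add_im]
  nlinarith [mul_nonneg ha.1 hb.1, mul_nonneg ha.2 hb.2]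

theorem Complex.sqrt_two_mul_norm_le_norm_add (h : ‖a ^ 2 - b ^ 2‖ ≤ ‖b‖ ^ 2 / 2) :
    √2 * ‖b‖ ≤ ‖a + b‖ := by
  have hsub := norm_sub_le_norm_add_of_first_quadrant ha hb
  have hparallelogram : ‖a + b‖ ^ 2 + ‖a - b‖ ^ 2 = 2 * (‖a‖ ^ 2 + ‖b‖ ^ 2) := by
    simpa only [sq] using parallelogram_law_with_norm ℝ a b
  have hprod : ‖a + b‖ * ‖a - b‖ = ‖a ^ 2 - b ^ 2‖ := by
    rw [← norm_mul, sq_sub_sq]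
  have ha_sq : ‖b‖ ^ 2 / 2 ≤ ‖a‖ ^ 2 := by
    have := norm_sub_norm_le (b ^ 2) (a ^ 2)
    rw [norm_sub_rev, norm_pow, norm_pow] at this
    linarith
  have hsq : 2 * ‖b‖ ^ 2 ≤ ‖a + b‖ ^ 2 := by
    by_contra! hlt
    nlinarith [norm_nonneg (a + b), norm_nonneg (a - b)]
  calc √2 * ‖b‖ = √(2 * ‖b‖ ^ 2) := by
        rw [Real.sqrt_mul zero_le_two, Real.sqrt_sq (norm_nonneg _)]
    _ ≤ √(‖a + b‖ ^ 2) := Real.sqrt_le_sqrt hsq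
    _ = ‖a + b‖ := Real.sqrt_sq (norm_nonneg _)

theorem Complex.norm_sub_mul_le_norm_sq_sub (h : ‖a ^ 2 - b ^ 2‖ ≤ ‖b‖ ^ 2 / 2) :
    ‖a - b‖ * (√2 * ‖b‖) ≤ ‖a ^ 2 - b ^ 2‖ := by
  rw [sq_sub_sq, norm_mul, mul_comm ‖a + b‖]
  gcongr
  exact sqrt_two_mul_norm_le_norm_add ha hb h

end FirstQuadrant

theorem Complex.norm_cpow_one_half_sub_le {z w : ℂ} (hz : 0 ≤ z.im) (hw : 0 ≤ w.im)
    (h : ‖w - z‖ ≤ ‖z‖ / 2) :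
    ‖w ^ (1 / 2 : ℂ) - z ^ (1 / 2 : ℂ)‖ ≤ ‖w - z‖ / (√2 * √‖z‖) := by
  rcases eq_or_ne z 0 with rfl | hz0
  · simp_all
  have key := norm_sub_mul_le_norm_sq_sub
    ⟨re_cpow_one_half_nonneg w, im_cpow_one_half_nonneg hw⟩
    ⟨re_cpow_one_half_nonneg z, im_cpow_one_half_nonneg hz⟩
  simp only [cpow_one_half_sq, norm_cpow_one_half, Real.sq_sqrt (norm_nonneg _)] at key
  rw [le_div_iff₀ (by positivity)]
  exact key h

theorem stmt6_general (l : ℂ) (hl : 0 ≤ l.im) (x1 y1 : ℝ)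
    (hx : |x1| < ‖l‖ / 2) (hy : |y1| < ‖l‖ / 2)
    (r : ℝ) (hr : 0 < r) :
    ‖Complex.exp (Complex.I * (l - ((x1 + y1 : ℝ) : ℂ) / 2) ^ (1/2 : ℂ) * r) -
        Complex.exp (Complex.I * l ^ (1/2 : ℂ) * r)‖ / (4 * Real.pi * r)
      ≤ (Real.sqrt 2 / (16 * Real.pi)) * |x1 + y1| / ‖l‖ ^ ((1:ℝ)/2) := by
  set Λ := l - ((x1 + y1 : ℝ) : ℂ) / 2
  have hΛ_im : 0 ≤ Λ.im := by simpa [Λ] using hl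
  have hΛ_sub : ‖Λ - l‖ = |x1 + y1| / 2 := by
    rw [show Λ - l = -(((x1 + y1 : ℝ) : ℂ) / 2) by ring, norm_neg, norm_div, norm_real,
      Real.norm_eq_abs, RCLike.norm_ofNat]
  have hΛ_near : ‖Λ - l‖ ≤ ‖l‖ / 2 := by
    rw [hΛ_sub]
    linarith [abs_add_le x1 y1]
  have hsqrt := norm_cpow_one_half_sub_le hl hΛ_im hΛ_near
  have hexp := norm_exp_I_mul_sub_exp_I_mul_le (im_cpow_one_half_nonneg hΛ_im)
    (im_cpow_one_half_nonneg hl) hr.le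
  rw [← Real.sqrt_eq_rpow, div_le_iff₀ (by positivity)]
  calc _ ≤ ‖Λ ^ (1 / 2 : ℂ) - l ^ (1 / 2 : ℂ)‖ * r := hexp
    _ ≤ |x1 + y1| / 2 / (√2 * √‖l‖) * r := by rw [← hΛ_sub]; gcongr
    _ = _ := by
      field_simp
      rw [Real.sq_sqrt zero_le_two]
      ring

/-- Pointwise comparison of the free-resolvent kernel at the shifted spectral
parameter `Λ = λ - (x₁+y₁)/2` with the one at `λ`. -/
theorem stmt6 (l : ℂ) (hl : 0 ≤ l.im) (hl0 : l ≠ 0) (x1 y1 : ℝ)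
    (hx : |x1| < ‖l‖ / 2) (hy : |y1| < ‖l‖ / 2)
    (r : ℝ) (hr : 0 < r) :
    ‖Complex.exp (Complex.I * (l - ((x1 + y1 : ℝ) : ℂ) / 2) ^ (1/2 : ℂ) * r) -
        Complex.exp (Complex.I * l ^ (1/2 : ℂ) * r)‖ / (4 * Real.pi * r)
      ≤ (Real.sqrt 2 / (16 * Real.pi)) * |x1 + y1| / ‖l‖ ^ ((1:ℝ)/2) :=
  stmt6_general l hl x1 y1 hx hy r hr
end
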